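/- If n_c > n − n_s (so the (n_s + n_c)×(n_s + n_c) hierarchical matrix with blocks A_s, S^T A P, P^T A S, A_c is symmetric positive semidefinite but singular), then the C.B.S. constant equals one: γ² = λ_max( A_s^{−1/2} S^T A P A_c^{−1} P^T A S A_s^{−1/2} ) = 1. -/

import Mathlib

open Matrix

/-- Smallest eigenvalue (real spectrum). -/
noncomputable def lamMin {n : ℕ} (M : Matrix (Fin n) (Fin n) ℝ) : ℝ :=
  sInf (spectrum ℝ M)

/-- Largest eigenvalue (real spectrum). -/
noncomputable def lamMax {n : ℕ} (M : Matrix (Fin n) (Fin n) ℝ) : ℝ :=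
  sSup (spectrum ℝ M)

/-- Smallest positive eigenvalue (real spectrum). -/
noncomputable def lamMinPos {n : ℕ} (M : Matrix (Fin n) (Fin n) ℝ) : ℝ :=
  sInf {t : ℝ | t ∈ spectrum ℝ M ∧ 0 < t}

/-- Energy norm of a vector induced by an SPD matrix `A`. -/
noncomputable def eNorm {n : ℕ} (A : Matrix (Fin n) (Fin n) ℝ) (v : Fin n → ℝ) : ℝ :=
  Real.sqrt (v ⬝ᵥ A.mulVec v)

/-- `A`-norm of a matrix `B`: `‖B‖_A = sup_{v ≠ 0} ‖Bv‖_A / ‖v‖_A`. -/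
noncomputable def aNorm {n : ℕ} (A B : Matrix (Fin n) (Fin n) ℝ) : ℝ :=
  sSup {r : ℝ | ∃ v : Fin n → ℝ, v ≠ 0 ∧ r = eNorm A (B.mulVec v) / eNorm A v}

/-- The `A`-orthogonal projection `Π_A = P (Pᵀ A P)⁻¹ Pᵀ A`. -/
noncomputable def proj {n nc : ℕ} (A : Matrix (Fin n) (Fin n) ℝ)
    (P : Matrix (Fin n) (Fin nc) ℝ) : Matrix (Fin n) (Fin n) ℝ :=
  P * (Pᵀ * A * P)⁻¹ * Pᵀ * A

/-- `M̃_s = Msᵀ (Ms + Msᵀ - As)⁻¹ Ms`. -/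
noncomputable def tMs {ns : ℕ} (Ms As : Matrix (Fin ns) (Fin ns) ℝ) :
    Matrix (Fin ns) (Fin ns) ℝ :=
  Msᵀ * (Ms + Msᵀ - As)⁻¹ * Ms

/-- `S M̃_s⁻¹ Sᵀ A`. -/
noncomputable def smoothX {n ns : ℕ} (A : Matrix (Fin n) (Fin n) ℝ)
    (S : Matrix (Fin n) (Fin ns) ℝ) (Ms : Matrix (Fin ns) (Fin ns) ℝ) :
    Matrix (Fin n) (Fin n) ℝ :=
  S * (tMs Ms (Sᵀ * A * S))⁻¹ * Sᵀ * A

/-- `σ_TL = λ_min⁺( S M̃_s⁻¹ Sᵀ A (I - Π_A) )`. -/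
noncomputable def sigmaTL {n ns nc : ℕ} (A : Matrix (Fin n) (Fin n) ℝ)
    (S : Matrix (Fin n) (Fin ns) ℝ) (P : Matrix (Fin n) (Fin nc) ℝ)
    (Ms : Matrix (Fin ns) (Fin ns) ℝ) : ℝ :=
  lamMinPos (smoothX A S Ms * (1 - proj A P))

/-- Exact TLHB iteration matrix. -/
noncomputable def Etl {n ns nc : ℕ} (A : Matrix (Fin n) (Fin n) ℝ)
    (S : Matrix (Fin n) (Fin ns) ℝ) (P : Matrix (Fin n) (Fin nc) ℝ)
    (Ms : Matrix (Fin ns) (Fin ns) ℝ) : Matrix (Fin n) (Fin n) ℝ :=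
  (1 - S * (Msᵀ)⁻¹ * Sᵀ * A) * (1 - proj A P) * (1 - S * Ms⁻¹ * Sᵀ * A)

/-- Inexact TLHB iteration matrix with coarse solver `Bc`. -/
noncomputable def EtlIn {n ns nc : ℕ} (A : Matrix (Fin n) (Fin n) ℝ)
    (S : Matrix (Fin n) (Fin ns) ℝ) (P : Matrix (Fin n) (Fin nc) ℝ)
    (Ms : Matrix (Fin ns) (Fin ns) ℝ) (Bc : Matrix (Fin nc) (Fin nc) ℝ) :
    Matrix (Fin n) (Fin n) ℝ :=
  (1 - S * (Msᵀ)⁻¹ * Sᵀ * A) * (1 - P * Bc⁻¹ * Pᵀ * A) * (1 - S * Ms⁻¹ * Sᵀ * A)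

/-- The positive semidefinite square root (Mathlib's former `Matrix.PosSemidef.sqrt`). -/
noncomputable def Matrix.PosSemidef.sqrt {m : Type*} [Fintype m] [DecidableEq m]
    {M : Matrix m m ℝ} (hM : M.PosSemidef) : Matrix m m ℝ :=
  hM.1.eigenvectorUnitary.1 * diagonal ((↑) ∘ (Real.sqrt ·) ∘ hM.1.eigenvalues) *
    (star hM.1.eigenvectorUnitary : Matrix m m ℝ)

/-! With `R = A_s^{1/2}` and `B = S R⁻¹` one has `Bᵀ A B = 1`, and the matrix in question is
`Bᵀ A Π B`, where `Π = P A_c⁻¹ Pᵀ A` is the `A`-orthogonal projection onto the range of `P`.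
Since `A - A Π = (1 - Π)ᵀ A (1 - Π)` is positive semidefinite, every eigenvalue is at most one.
If `n_c > n - n_s`, counting dimensions gives `S v_s = P v_c` with `v_s ≠ 0`; then `Π` fixes
`B (R v_s) = S v_s`, so `R v_s` is an eigenvector for the eigenvalue one. -/

namespace Matrix

lemma mulVec_injective_of_rank_eq {m n K : Type*} [Fintype n] [Field K] {B : Matrix m n K}
    (hB : B.rank = Fintype.card n) : Function.Injective B.mulVec :=
  mulVec_injective_iff.mpr <| linearIndependent_iff_card_eq_finrank_span.mpr <| by
    rw [Set.finrank, ← rank_eq_finrank_span_cols, hB]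

lemma exists_mulVec_eq_mulVec_of_card_lt {m k l K : Type*} [Fintype m] [Fintype k] [Fintype l]
    [Field K] (S : Matrix m k K) {P : Matrix m l K} (hP : Function.Injective P.mulVec)
    (h : Fintype.card m < Fintype.card k + Fintype.card l) :
    ∃ vs ≠ 0, ∃ vc, S *ᵥ vs = P *ᵥ vc := by
  obtain ⟨⟨vs, vc⟩, hker, hne⟩ := Submodule.exists_mem_ne_zero_of_ne_bot <|
    LinearMap.ker_ne_bot_of_finrank_lt (f := S.mulVecLin.coprod (-P.mulVecLin)) <| by
      simpa [Module.finrank_prod] using h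
  have hS : S *ᵥ vs = P *ᵥ vc := by
    simpa [← sub_eq_add_neg, sub_eq_zero] using hker
  have hvs : vs ≠ 0 := by
    rintro rfl
    refine hne (Prod.ext rfl (hP ?_))
    simpa using hS.symm
  exact ⟨vs, hvs, vc, hS⟩

variable {m : Type*} [Fintype m] [DecidableEq m]

lemma PosSemidef.isHermitian_sqrt {M : Matrix m m ℝ} (hM : M.PosSemidef) :
    hM.sqrt.IsHermitian := by
  simp [PosSemidef.sqrt, IsHermitian, star_eq_conjTranspose, Matrix.mul_assoc]

lemma PosSemidef.sqrt_mul_sqrt {M : Matrix m m ℝ} (hM : M.PosSemidef) :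
    hM.sqrt * hM.sqrt = M := by
  set U : Matrix m m ℝ := hM.1.eigenvectorUnitary.1
  set D : Matrix m m ℝ := diagonal ((↑) ∘ (Real.sqrt ·) ∘ hM.1.eigenvalues)
  have hU : star U * U = 1 := UnitaryGroup.star_mul_self _
  have hD : D * D = diagonal ((↑) ∘ hM.1.eigenvalues) := by
    simp [D, diagonal_mul_diagonal, Function.comp_def, Real.mul_self_sqrt (hM.eigenvalues_nonneg _)]
  calc hM.sqrt * hM.sqrt = U * (D * (star U * U) * D) * star U := by
        simp only [PosSemidef.sqrt, U, D, Matrix.mul_assoc]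
    _ = M := by
        rw [hU, Matrix.mul_one, hD]
        exact (hM.1.spectral_theorem).symm

lemma PosSemidef.transpose_sqrt {M : Matrix m m ℝ} (hM : M.PosSemidef) : hM.sqrtᵀ = hM.sqrt := by
  simpa [conjTranspose_eq_transpose_of_trivial] using hM.isHermitian_sqrt.eq

lemma PosDef.isUnit_det_sqrt {M : Matrix m m ℝ} (hM : M.PosDef) :
    IsUnit hM.posSemidef.sqrt.det := by
  have h : hM.posSemidef.sqrt.det * hM.posSemidef.sqrt.det = M.det := by
    rw [← det_mul, hM.posSemidef.sqrt_mul_sqrt]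
  exact isUnit_iff_ne_zero.mpr fun h0 => hM.det_pos.ne' (by rw [← h, h0, zero_mul])

lemma PosDef.inv_sqrt_mul_mul_inv_sqrt {M : Matrix m m ℝ} (hM : M.PosDef) :
    hM.posSemidef.sqrt⁻¹ * M * hM.posSemidef.sqrt⁻¹ = 1 := by
  set R := hM.posSemidef.sqrt
  have hR : IsUnit R.det := hM.isUnit_det_sqrt
  have hRR : R * R = M := hM.posSemidef.sqrt_mul_sqrt
  calc R⁻¹ * M * R⁻¹ = (R⁻¹ * R) * (R * R⁻¹) := by
        rw [← hRR]; simp only [Matrix.mul_assoc]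
    _ = 1 := by rw [nonsing_inv_mul _ hR, mul_nonsing_inv _ hR, Matrix.one_mul]

lemma mem_spectrum_iff_exists_mulVec_eq_smul {K : Type*} [Field K] {X : Matrix m m K} {μ : K} :
    μ ∈ spectrum K X ↔ ∃ v ≠ 0, X *ᵥ v = μ • v := by
  rw [← spectrum_toLin', ← Module.End.hasEigenvalue_iff_mem_spectrum]
  constructor
  · intro h
    obtain ⟨v, hv, hv0⟩ := h.exists_hasEigenvector
    exact ⟨v, hv0, Module.End.mem_eigenspace_iff.mp hv⟩
  · rintro ⟨v, hv0, hv⟩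
    exact Module.End.hasEigenvalue_of_hasEigenvector ⟨Module.End.mem_eigenspace_iff.mpr hv, hv0⟩

lemma le_of_mem_spectrum_of_posSemidef_sub {X : Matrix m m ℝ} {c t : ℝ}
    (hX : (c • 1 - X).PosSemidef) (ht : t ∈ spectrum ℝ X) : t ≤ c := by
  obtain ⟨v, hv, hXv⟩ := mem_spectrum_iff_exists_mulVec_eq_smul.mp ht
  have hquad : 0 ≤ (c - t) * (v ⬝ᵥ v) := by
    simpa [sub_mulVec, smul_mulVec, hXv, dotProduct_sub, ← sub_mul] using
      hX.dotProduct_mulVec_nonneg v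
  have hvv : 0 < v ⬝ᵥ v := by
    simpa using dotProduct_star_self_pos_iff.mpr hv
  linarith [nonneg_of_mul_nonneg_left hquad hvv]

end Matrix

lemma lamMax_eq_of_mem_spectrum {k : ℕ} {X : Matrix (Fin k) (Fin k) ℝ} {c : ℝ}
    (hc : c ∈ spectrum ℝ X) (hX : (c • 1 - X).PosSemidef) : lamMax X = c :=
  IsGreatest.csSup_eq ⟨hc, fun _ => le_of_mem_spectrum_of_posSemidef_sub hX⟩

section Projection

variable {n nc : ℕ} {A : Matrix (Fin n) (Fin n) ℝ} {P : Matrix (Fin n) (Fin nc) ℝ}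

lemma isUnit_det_transpose_mul_mul (hA : A.PosDef) (hP : Function.Injective P.mulVec) :
    IsUnit (Pᵀ * A * P).det :=
  isUnit_iff_ne_zero.mpr (hA.conjTranspose_mul_mul_same hP).det_pos.ne'

lemma proj_mul (hAc : IsUnit (Pᵀ * A * P).det) : proj A P * P = P := by
  calc proj A P * P = P * ((Pᵀ * A * P)⁻¹ * (Pᵀ * A * P)) := by
        simp only [proj, Matrix.mul_assoc]
    _ = P := by rw [nonsing_inv_mul _ hAc, Matrix.mul_one]

lemma proj_mul_proj (hAc : IsUnit (Pᵀ * A * P).det) : proj A P * proj A P = proj A P := by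
  have e : proj A P = P * ((Pᵀ * A * P)⁻¹ * Pᵀ * A) := by simp only [proj, Matrix.mul_assoc]
  nth_rewrite 2 [e]
  rw [← Matrix.mul_assoc, proj_mul hAc, ← e]

lemma transpose_proj_mul (hA : Aᵀ = A) : (proj A P)ᵀ * A = A * proj A P := by
  simp only [proj, transpose_mul, transpose_transpose, hA, transpose_nonsing_inv, Matrix.mul_assoc]

lemma posSemidef_sub_mul_proj (hA : A.PosSemidef) (hAc : IsUnit (Pᵀ * A * P).det) :
    (A - A * proj A P).PosSemidef := by
  have hAT : Aᵀ = A := by simpa [conjTranspose_eq_transpose_of_trivial] using hA.1.eq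
  have h : (1 - proj A P)ᵀ * A * (1 - proj A P) = A - A * proj A P := by
    simp only [transpose_sub, transpose_one, Matrix.sub_mul, Matrix.mul_sub, Matrix.one_mul,
      Matrix.mul_one, transpose_proj_mul hAT, Matrix.mul_assoc, proj_mul_proj hAc]
    abel
  have := hA.conjTranspose_mul_mul_same (1 - proj A P)
  rwa [conjTranspose_eq_transpose_of_trivial, h] at this

lemma lamMax_transpose_mul_mul_proj_mul (hA : A.PosDef) (hP : Function.Injective P.mulVec)
    {k : ℕ} {B : Matrix (Fin n) (Fin k) ℝ} (hB : Bᵀ * A * B = 1) {w : Fin k → ℝ}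
    {vc : Fin nc → ℝ} (hw : w ≠ 0) (hBw : B *ᵥ w = P *ᵥ vc) :
    lamMax (Bᵀ * (A * proj A P) * B) = 1 := by
  have hAc := isUnit_det_transpose_mul_mul hA hP
  refine lamMax_eq_of_mem_spectrum (mem_spectrum_iff_exists_mulVec_eq_smul.mpr ⟨w, hw, ?_⟩) ?_
  · calc (Bᵀ * (A * proj A P) * B) *ᵥ w = Bᵀ *ᵥ (A *ᵥ (proj A P *ᵥ (B *ᵥ w))) := by
          simp only [mulVec_mulVec, Matrix.mul_assoc]
      _ = (Bᵀ * A * B) *ᵥ w := by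
          rw [hBw, mulVec_mulVec (M := proj A P), proj_mul hAc, ← hBw]
          simp only [mulVec_mulVec, Matrix.mul_assoc]
      _ = (1 : ℝ) • w := by rw [hB, one_mulVec, one_smul]
  · have h : (1 : ℝ) • 1 - Bᵀ * (A * proj A P) * B = Bᵀ * (A - A * proj A P) * B := by
      rw [one_smul, ← hB, Matrix.mul_sub, Matrix.sub_mul]
    have := (posSemidef_sub_mul_proj hA.posSemidef hAc).conjTranspose_mul_mul_same B
    rwa [conjTranspose_eq_transpose_of_trivial, ← h] at this

end Projection

theorem cbs_constant_eq_one_general {n ns nc : ℕ}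
    (A : Matrix (Fin n) (Fin n) ℝ) (hA : A.PosDef)
    (S : Matrix (Fin n) (Fin ns) ℝ)
    (P : Matrix (Fin n) (Fin nc) ℝ) (hP : P.rank = nc)
    (hAs : (Sᵀ * A * S).PosDef)
    (hgt : n - ns < nc) :
    lamMax ((hAs.posSemidef.sqrt)⁻¹ * (Sᵀ * A * P) * (Pᵀ * A * P)⁻¹ * (Pᵀ * A * S) *
      (hAs.posSemidef.sqrt)⁻¹) = 1 := by
  set R := hAs.posSemidef.sqrt
  have hR : IsUnit R.det := hAs.isUnit_det_sqrt
  have hRT : (R⁻¹)ᵀ = R⁻¹ := by rw [transpose_nonsing_inv, hAs.posSemidef.transpose_sqrt]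
  have hB : (S * R⁻¹)ᵀ * A * (S * R⁻¹) = 1 := by
    simpa only [transpose_mul, hRT, Matrix.mul_assoc] using hAs.inv_sqrt_mul_mul_inv_sqrt
  have hX : R⁻¹ * (Sᵀ * A * P) * (Pᵀ * A * P)⁻¹ * (Pᵀ * A * S) * R⁻¹ =
      (S * R⁻¹)ᵀ * (A * proj A P) * (S * R⁻¹) := by
    simp only [proj, transpose_mul, hRT, Matrix.mul_assoc]
  have hPinj : Function.Injective P.mulVec := mulVec_injective_of_rank_eq (by simpa using hP)
  obtain ⟨vs, hvs, vc, hSP⟩ :=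
    exists_mulVec_eq_mulVec_of_card_lt S hPinj (by simp only [Fintype.card_fin]; omega)
  have hRvs : R *ᵥ vs ≠ 0 := by
    simpa using (mulVec_injective_iff_isUnit.mpr ((isUnit_iff_isUnit_det R).mpr hR)).ne hvs
  have hBRvs : (S * R⁻¹) *ᵥ (R *ᵥ vs) = P *ᵥ vc := by
    rw [mulVec_mulVec, Matrix.mul_assoc, nonsing_inv_mul _ hR, Matrix.mul_one, hSP]
  rw [hX]
  exact lamMax_transpose_mul_mul_proj_mul hA hPinj hB hRvs hBRvs

/-- If `n_c > n - n_s`, then the C.B.S. constant equals one: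
`γ² = λ_max( A_s^{-1/2} Sᵀ A P A_c⁻¹ Pᵀ A S A_s^{-1/2} ) = 1`. -/
theorem cbs_constant_eq_one {n ns nc : ℕ}
    (A : Matrix (Fin n) (Fin n) ℝ) (hA : A.PosDef)
    (S : Matrix (Fin n) (Fin ns) ℝ) (hS : S.rank = ns)
    (P : Matrix (Fin n) (Fin nc) ℝ) (hP : P.rank = nc)
    (hns : ns < n) (hnc : nc < n) (hsum : n ≤ ns + nc)
    (hSP : (fromCols S P).rank = n)
    (hAs : (Sᵀ * A * S).PosDef)
    (hgt : n - ns < nc) :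
    lamMax ((hAs.posSemidef.sqrt)⁻¹ * (Sᵀ * A * P) * (Pᵀ * A * P)⁻¹ * (Pᵀ * A * S) *
      (hAs.posSemidef.sqrt)⁻¹) = 1 :=
  cbs_constant_eq_one_general A hA S P hP hAs hgt
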